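/- Let A have restricted isometry constants δ_q. Let ŵ ∈ W^k satisfy supp(x_S) ⊆ supp(ŵ), let x^p ∈ ℝⁿ be k-sparse, u^p = x^p + Aᵀ(y − A x^p), and let w^(1), …, w^(ω) ∈ P^k be successive compression minimizers at x^p. Then ‖y − A[u^p ⊗ (w^(1) ⊗ ⋯ ⊗ w^(ω))]‖₂ ≤ [δ_{2k} + 2(ω−1)δ_{3k}]·√(1+δ_k)·‖x_S − x^p‖₂ + (2ω−1)·√(1+δ_k)·‖Aᵀν'‖₂ + ‖ν'‖₂. -/
import Mathlib


open Finset
open Matrix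

noncomputable def nsq {ι : Type*} [Fintype ι] (x : ι → ℝ) : ℝ := ∑ i, (x i) ^ 2

noncomputable def n2 {ι : Type*} [Fintype ι] (x : ι → ℝ) : ℝ := Real.sqrt (nsq x)

noncomputable def supp {n : ℕ} (x : Fin n → ℝ) : Finset (Fin n) :=
  Finset.univ.filter (fun i => x i ≠ 0)

def Sparse {n : ℕ} (k : ℕ) (x : Fin n → ℝ) : Prop := (supp x).card ≤ k

def restr {n : ℕ} (x : Fin n → ℝ) (T : Finset (Fin n)) : Fin n → ℝ :=
  fun i => if i ∈ T then x i else 0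

def SatRIP {m n : ℕ} (A : Matrix (Fin m) (Fin n) ℝ) (q : ℕ) (δ : ℝ) : Prop :=
  ∀ z : Fin n → ℝ, Sparse q z →
    (1 - δ) * nsq z ≤ nsq (A.mulVec z) ∧ nsq (A.mulVec z) ≤ (1 + δ) * nsq z

/-- `δ` is the `q`-th order restricted isometry constant of `A`:
the smallest `δ' ≥ 0` such that `(1-δ')‖z‖² ≤ ‖Az‖² ≤ (1+δ')‖z‖²` for all `q`-sparse `z`. -/
def IsRIC {m n : ℕ} (A : Matrix (Fin m) (Fin n) ℝ) (q : ℕ) (δ : ℝ) : Prop :=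
  IsLeast {δ' : ℝ | 0 ≤ δ' ∧ SatRIP A q δ'} δ

/-- membership in `W^k`: binary vectors with exactly `k` entries equal to 1. -/
def InW {n : ℕ} (k : ℕ) (w : Fin n → ℝ) : Prop :=
  (∀ i, w i = 0 ∨ w i = 1) ∧ (Finset.univ.filter (fun i => w i = 1)).card = k

/-- membership in the polytope `P^k`. -/
def InP {n : ℕ} (k : ℕ) (w : Fin n → ℝ) : Prop :=
  (∑ i, w i) = (k : ℝ) ∧ ∀ i, 0 ≤ w i ∧ w i ≤ 1

/-- `S` is an index set of the `k` largest absolute entries of `x`. -/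
def IsTopK {n : ℕ} (x : Fin n → ℝ) (k : ℕ) (S : Finset (Fin n)) : Prop :=
  S.card = k ∧ ∀ i ∈ S, ∀ j ∉ S, |x j| ≤ |x i|

/-- `d` is a hard thresholding `H_k(z)` of `z`. -/
def IsHT {n : ℕ} (k : ℕ) (z d : Fin n → ℝ) : Prop :=
  Sparse k d ∧ ∀ d' : Fin n → ℝ, Sparse k d' → n2 (z - d) ≤ n2 (z - d')

/-- `w 0, …, w (ω-1)` are successive compression minimizers at `x^p` (with `u^p = up`). -/
def SCM {m n : ℕ} (A : Matrix (Fin m) (Fin n) ℝ) (y : Fin m → ℝ) (k ω : ℕ)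
    (up : Fin n → ℝ) (w : ℕ → Fin n → ℝ) : Prop :=
  ∀ j < ω, InP k (w j) ∧ ∀ v : Fin n → ℝ, InP k v →
    n2 (y - A.mulVec (up * (∏ l ∈ Finset.range j, w l) * w j)) ≤
    n2 (y - A.mulVec (up * (∏ l ∈ Finset.range j, w l) * v))

/-- the `ℓ∞` norm of `x` restricted to `T` (zero if `T` is empty). -/
noncomputable def linfT {n : ℕ} (x : Fin n → ℝ) (T : Finset (Fin n)) : ℝ :=
  if h : T.Nonempty then T.sup' h (fun j => |x j|) else 0

section basic
variable {ι : Type*} [Fintype ι]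

lemma nsq_nonneg (x : ι → ℝ) : 0 ≤ nsq x := Finset.sum_nonneg fun _ _ => sq_nonneg _
lemma n2_nonneg (x : ι → ℝ) : 0 ≤ n2 x := Real.sqrt_nonneg _
lemma n2_sq (x : ι → ℝ) : n2 x ^ 2 = nsq x := Real.sq_sqrt (nsq_nonneg x)

lemma dot_le (x y : ι → ℝ) : ∑ i, x i * y i ≤ n2 x * n2 y := by
  have h := Finset.sum_mul_sq_le_sq_mul_sq Finset.univ x y
  have h2 : (∑ i, x i * y i) ≤ |∑ i, x i * y i| := le_abs_self _
  have h3 : |∑ i, x i * y i| = Real.sqrt ((∑ i, x i * y i) ^ 2) := (Real.sqrt_sq_eq_abs _).symm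
  rw [h3] at h2
  refine h2.trans ?_
  rw [show n2 x * n2 y = Real.sqrt (nsq x * nsq y) by
    rw [Real.sqrt_mul (nsq_nonneg x)]; rfl]
  exact Real.sqrt_le_sqrt h

lemma n2_add_le (x y : ι → ℝ) : n2 (x + y) ≤ n2 x + n2 y := by
  have key : nsq (x + y) ≤ (n2 x + n2 y) ^ 2 := by
    have hd := dot_le x y
    have : nsq (x + y) = nsq x + 2 * (∑ i, x i * y i) + nsq y := by
      unfold nsq
      rw [Finset.mul_sum, ← Finset.sum_add_distrib, ← Finset.sum_add_distrib]
      exact Finset.sum_congr rfl fun i _ => by simp only [Pi.add_apply]; ring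
    rw [this]
    have hx := n2_sq x; have hy := n2_sq y
    nlinarith [n2_nonneg x, n2_nonneg y]
  calc n2 (x + y) = Real.sqrt (nsq (x + y)) := rfl
    _ ≤ Real.sqrt ((n2 x + n2 y) ^ 2) := Real.sqrt_le_sqrt key
    _ = |n2 x + n2 y| := Real.sqrt_sq_eq_abs _
    _ = n2 x + n2 y := abs_of_nonneg (by have := n2_nonneg x; have := n2_nonneg y; linarith)

lemma n2_neg (x : ι → ℝ) : n2 (-x) = n2 x := by
  unfold n2 nsq; congr 1; exact Finset.sum_congr rfl fun i _ => by simp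

lemma n2_smul (c : ℝ) (x : ι → ℝ) : n2 (c • x) = |c| * n2 x := by
  unfold n2 nsq
  have : ∑ i, (c • x) i ^ 2 = c ^ 2 * ∑ i, x i ^ 2 := by
    rw [Finset.mul_sum]; exact Finset.sum_congr rfl fun i _ => by simp [mul_pow]
  rw [this, Real.sqrt_mul (sq_nonneg c), Real.sqrt_sq_eq_abs]

lemma nsq_eq_zero_iff (x : ι → ℝ) : nsq x = 0 ↔ x = 0 := by
  unfold nsq
  rw [Finset.sum_eq_zero_iff_of_nonneg (fun i _ => sq_nonneg _)]
  constructor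
  · intro h; funext i; simpa [pow_eq_zero_iff] using h i (Finset.mem_univ i)
  · intro h; subst h; simp

lemma n2_eq_zero_iff (x : ι → ℝ) : n2 x = 0 ↔ x = 0 := by
  unfold n2
  rw [Real.sqrt_eq_zero (nsq_nonneg x), nsq_eq_zero_iff]

end basic

section rip
variable {m n : ℕ} {A : Matrix (Fin m) (Fin n) ℝ} {q : ℕ} {δ : ℝ}

lemma supp_subset_of_subsupp {u v : Fin n → ℝ} (h : ∀ i, v i ≠ 0 → u i ≠ 0) :
    supp v ⊆ supp u := fun i hi => by
  simp only [supp, Finset.mem_filter, Finset.mem_univ, true_and] at *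
  exact h i hi

lemma supp_add_subset (u v : Fin n → ℝ) : supp (u + v) ⊆ supp u ∪ supp v := by
  intro i hi
  simp only [supp, Finset.mem_filter, Finset.mem_univ, true_and, Finset.mem_union,
    Pi.add_apply] at *
  by_contra hc
  push_neg at hc
  simp [hc.1, hc.2] at hi

lemma supp_restr_subset (h : Fin n → ℝ) (B : Finset (Fin n)) : supp (restr h B) ⊆ B := by
  intro i hi
  simp only [supp, restr, Finset.mem_filter, Finset.mem_univ, true_and] at hi
  by_contra hc
  simp [hc] at hi

lemma dot_restr_self (h : Fin n → ℝ) (B : Finset (Fin n)) :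
    nsq (restr h B) = ∑ i, h i * restr h B i := by
  unfold nsq
  refine Finset.sum_congr rfl fun i _ => ?_
  by_cases hi : i ∈ B <;> simp [restr, hi] <;> ring

/-- upper RIP, n2 form -/
lemma rip_n2 (hA : SatRIP A q δ) (hδ : 0 ≤ δ) {z : Fin n → ℝ} (hz : Sparse q z) :
    n2 (A.mulVec z) ≤ Real.sqrt (1 + δ) * n2 z := by
  have h := (hA z hz).2
  have : n2 (A.mulVec z) = Real.sqrt (nsq (A.mulVec z)) := rfl
  rw [this]
  calc Real.sqrt (nsq (A.mulVec z)) ≤ Real.sqrt ((1 + δ) * nsq z) := Real.sqrt_le_sqrt h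
    _ = Real.sqrt (1 + δ) * n2 z := by rw [Real.sqrt_mul (by linarith)]; rfl

lemma rip_P_bound (hA : SatRIP A q δ) {z : Fin n → ℝ} (hz : Sparse q z) :
    |nsq (A.mulVec z) - nsq z| ≤ δ * nsq z := by
  have h := hA z hz
  rw [abs_le]; constructor <;> nlinarith [h.1, h.2]

/-- polarization bound -/
lemma nsq_eq_dot (x : Fin m → ℝ) : nsq x = x ⬝ᵥ x := by
  simp [nsq, dotProduct, sq]

lemma nsq_add_expand {p : ℕ} (x y : Fin p → ℝ) :
    nsq (x + y) = nsq x + 2 * (x ⬝ᵥ y) + nsq y := by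
  simp only [nsq, dotProduct, Pi.add_apply, Finset.mul_sum]
  rw [← Finset.sum_add_distrib, ← Finset.sum_add_distrib]
  exact Finset.sum_congr rfl fun i _ => by ring

lemma nsq_sub_expand {p : ℕ} (x y : Fin p → ℝ) :
    nsq (x - y) = nsq x - 2 * (x ⬝ᵥ y) + nsq y := by
  simp only [nsq, dotProduct, Pi.sub_apply, Finset.mul_sum]
  rw [← Finset.sum_sub_distrib, ← Finset.sum_add_distrib]
  exact Finset.sum_congr rfl fun i _ => by ring

lemma nsq_smul (c : ℝ) (x : Fin n → ℝ) : nsq (c • x) = c ^ 2 * nsq x := by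
  rw [← n2_sq, n2_smul, mul_pow, sq_abs, n2_sq]

/-- polarization bound -/
lemma rip_dot (hA : SatRIP A q δ) (hδ : 0 ≤ δ) (u v : Fin n → ℝ)
    (hc : (supp u ∪ supp v).card ≤ q) :
    (A.mulVec u) ⬝ᵥ (A.mulVec v) - u ⬝ᵥ v ≤ δ * (n2 u * n2 v) := by
  rcases eq_or_ne (n2 u) 0 with hu0 | hu0
  · have hz : u = 0 := (n2_eq_zero_iff u).1 hu0
    subst hz
    simp [hu0]
  rcases eq_or_ne (n2 v) 0 with hv0 | hv0
  · have hz : v = 0 := (n2_eq_zero_iff v).1 hv0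
    subst hz
    simp [hv0]
  set a := n2 v with ha
  set b := n2 u with hb
  have hapos : 0 < a := lt_of_le_of_ne (n2_nonneg v) (Ne.symm hv0)
  have hbpos : 0 < b := lt_of_le_of_ne (n2_nonneg u) (Ne.symm hu0)
  set u' := a • u with hu'
  set v' := b • v with hv'
  have hsub : ∀ z : Fin n → ℝ, (∀ i, u i = 0 → v i = 0 → z i = 0) → Sparse q z := by
    intro z hz
    refine le_trans (Finset.card_le_card ?_) hc
    intro i hi
    simp only [supp, Finset.mem_filter, Finset.mem_univ, true_and, Finset.mem_union] at *
    by_contra hc'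
    push_neg at hc'
    exact hi (hz i hc'.1 hc'.2)
  have hsp : Sparse q (u' + v') := hsub _ (fun i h1 h2 => by simp [hu', hv', h1, h2])
  have hsm : Sparse q (u' - v') := hsub _ (fun i h1 h2 => by simp [hu', hv', h1, h2])
  have h1 := rip_P_bound hA hsp
  have h2 := rip_P_bound hA hsm
  rw [abs_le] at h1 h2
  set X := (A.mulVec u) ⬝ᵥ (A.mulVec v) - u ⬝ᵥ v with hX
  have hnu' : nsq u' = a ^ 2 * b ^ 2 := by
    rw [hu', nsq_smul, ← n2_sq, ← hb]
  have hnv' : nsq v' = b ^ 2 * a ^ 2 := by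
    rw [hv', nsq_smul, ← n2_sq, ← ha]
  have hexp : nsq (A.mulVec (u' + v')) - nsq (u' + v')
      - (nsq (A.mulVec (u' - v')) - nsq (u' - v')) = 4 * (a * b) * X := by
    rw [Matrix.mulVec_add, Matrix.mulVec_sub, nsq_add_expand, nsq_sub_expand,
      nsq_add_expand, nsq_sub_expand]
    simp only [hu', hv', Matrix.mulVec_smul, smul_dotProduct, dotProduct_smul,
      smul_eq_mul, hX]
    ring
  have hsum : nsq (u' + v') + nsq (u' - v') = 4 * (a ^ 2 * b ^ 2) := by
    rw [nsq_add_expand, nsq_sub_expand, hnu', hnv']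
    ring
  have hfin : 4 * (a * b) * X ≤ 4 * δ * (a ^ 2 * b ^ 2) := by nlinarith [h1.2, h2.1]
  nlinarith [hfin, mul_pos hapos hbpos]

/-- masked correlation bound: `‖((AᵀA - I) d)_B‖ ≤ δ ‖d‖` -/
lemma mask_bound (hA : SatRIP A q δ) (hδ : 0 ≤ δ) (d : Fin n → ℝ) (B : Finset (Fin n))
    (hc : (B ∪ supp d).card ≤ q) :
    n2 (restr (A.transpose.mulVec (A.mulVec d) - d) B) ≤ δ * n2 d := by
  set h := A.transpose.mulVec (A.mulVec d) - d with hh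
  set v := restr h B with hv
  have h1 : nsq v = h ⬝ᵥ v := by
    rw [dot_restr_self]
    rfl
  have h2 : h ⬝ᵥ v = (A.mulVec d) ⬝ᵥ (A.mulVec v) - d ⬝ᵥ v := by
    rw [hh]
    have : (A.transpose.mulVec (A.mulVec d) - d) ⬝ᵥ v
        = (A.transpose.mulVec (A.mulVec d)) ⬝ᵥ v - d ⬝ᵥ v := sub_dotProduct _ _ _
    rw [this]
    congr 1
    rw [Matrix.mulVec_transpose, ← Matrix.dotProduct_mulVec, dotProduct_comm]
  have hcard : (supp d ∪ supp v).card ≤ q := by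
    refine le_trans (Finset.card_le_card ?_) hc
    intro i hi
    rcases Finset.mem_union.1 hi with hi | hi
    · exact Finset.mem_union.2 (Or.inr hi)
    · exact Finset.mem_union.2 (Or.inl (supp_restr_subset h B hi))
  have h3 := rip_dot hA hδ d v hcard
  have h4 : nsq v ≤ δ * (n2 d * n2 v) := by
    rw [h1, h2]
    exact h3
  rw [← n2_sq] at h4
  rcases eq_or_ne (n2 v) 0 with h0 | h0
  · rw [h0]
    exact mul_nonneg hδ (n2_nonneg _)
  · have hpos : 0 < n2 v := lt_of_le_of_ne (n2_nonneg v) (Ne.symm h0)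
    nlinarith

lemma n2_restr_le {n : ℕ} (h : Fin n → ℝ) (B : Finset (Fin n)) : n2 (restr h B) ≤ n2 h := by
  apply Real.sqrt_le_sqrt
  apply Finset.sum_le_sum
  intro i _
  by_cases hi : i ∈ B <;> simp [restr, hi, sq_nonneg]

end rip

lemma sum01 {n : ℕ} (s : Finset (Fin n)) (v : Fin n → ℝ) (hb : ∀ i ∈ s, v i = 0 ∨ v i = 1) :
    ∑ i ∈ s, v i = ((s.filter fun i => v i = 1).card : ℝ) := by
  rw [Finset.card_filter]
  push_cast
  refine Finset.sum_congr rfl fun i hi => ?_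
  rcases hb i hi with h | h <;> simp [h]

lemma comb {n k : ℕ} (C : ℝ) (F : (Fin n → ℝ) → ℝ)
    (hF : ∀ (a b : ℝ) (u v : Fin n → ℝ), 0 ≤ a → 0 ≤ b → a + b = 1 →
      F (a • u + b • v) ≤ a * F u + b * F v)
    (hbin : ∀ v : Fin n → ℝ, (∀ i, v i = 0 ∨ v i = 1) → (∑ i, v i) ≤ (k : ℝ) → F v ≤ C) :
    ∀ v : Fin n → ℝ, (∀ i, 0 ≤ v i ∧ v i ≤ 1) → (∑ i, v i) ≤ (k : ℝ) → F v ≤ C := by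
  suffices H : ∀ N : ℕ, ∀ v : Fin n → ℝ,
      (Finset.univ.filter fun i => v i ≠ 0 ∧ v i ≠ 1).card = N →
      (∀ i, 0 ≤ v i ∧ v i ≤ 1) → (∑ i, v i) ≤ (k : ℝ) → F v ≤ C by
    intro v hv hs; exact H _ v rfl hv hs
  intro N
  induction N using Nat.strong_induction_on with
  | _ N ih =>
  intro v hcard hv hs
  rcases Nat.eq_zero_or_pos N with h0 | hNpos
  · -- all entries binary
    subst h0
    apply hbin v _ hs
    intro i
    by_contra hc
    push_neg at hc
    have : i ∈ Finset.univ.filter fun i => v i ≠ 0 ∧ v i ≠ 1 := by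
      simp [hc.1, hc.2]
    rw [Finset.card_eq_zero] at hcard
    simp [hcard] at this
  -- there is a fractional entry i
  obtain ⟨i, hi⟩ : ∃ i, i ∈ Finset.univ.filter fun i => v i ≠ 0 ∧ v i ≠ 1 := by
    have : 0 < (Finset.univ.filter fun i => v i ≠ 0 ∧ v i ≠ 1).card := by rw [hcard]; exact hNpos
    exact Finset.card_pos.1 this
  simp only [Finset.mem_filter, Finset.mem_univ, true_and] at hi
  have hi0 : 0 < v i := lt_of_le_of_ne (hv i).1 (Ne.symm hi.1)
  have hi1 : v i < 1 := lt_of_le_of_ne (hv i).2 hi.2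
  by_cases hone : N = 1
  · -- i is the unique fractional entry
    subst hone
    have hbinrest : ∀ l, l ≠ i → v l = 0 ∨ v l = 1 := by
      intro l hl
      by_contra hc
      push_neg at hc
      have h2 : ({l, i} : Finset (Fin n)) ⊆ Finset.univ.filter fun j => v j ≠ 0 ∧ v j ≠ 1 := by
        intro a ha
        rcases Finset.mem_insert.1 ha with rfl | ha
        · simp [hc.1, hc.2]
        · simp only [Finset.mem_singleton] at ha
          subst ha
          simp [hi.1, hi.2]
      have := Finset.card_le_card h2
      rw [hcard, Finset.card_insert_of_notMem (by simp [hl]), Finset.card_singleton] at this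
      omega
    set p : Fin n → ℝ := Function.update v i 0 with hp
    set q : Fin n → ℝ := Function.update v i 1 with hq
    have hvEq : v = (1 - v i) • p + (v i) • q := by
      funext l
      by_cases hl : l = i
      · subst hl; simp [hp, hq]; try ring
      · simp [hp, hq, Function.update_of_ne hl, Pi.add_apply]; ring
    have hps : ∑ l, p l = ∑ l, v l - v i := by
      rw [hp, Finset.sum_update_of_mem (Finset.mem_univ i), Finset.sdiff_singleton_eq_erase]
      rw [show ∑ l, v l = v i + ∑ l ∈ Finset.univ.erase i, v l from
        (Finset.add_sum_erase _ _ (Finset.mem_univ i)).symm]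
      ring
    have herase01 : ∀ l ∈ Finset.univ.erase i, v l = 0 ∨ v l = 1 := fun l hl =>
      hbinrest l (Finset.ne_of_mem_erase hl)
    have hmnat : ∑ l ∈ Finset.univ.erase i, v l
        = (((Finset.univ.erase i).filter fun l => v l = 1).card : ℝ) := sum01 _ _ herase01
    have hmlt : (((Finset.univ.erase i).filter fun l => v l = 1).card : ℝ) + 1 ≤ (k : ℝ) := by
      have h1 : v i + ∑ l ∈ Finset.univ.erase i, v l ≤ (k : ℝ) := by
        rw [Finset.add_sum_erase _ _ (Finset.mem_univ i)]; exact hs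
      rw [hmnat] at h1
      have : (((Finset.univ.erase i).filter fun l => v l = 1).card : ℝ) < (k : ℝ) := by
        linarith
      exact_mod_cast Nat.succ_le_of_lt (by exact_mod_cast this)
    have hFp : F p ≤ C := by
      apply hbin
      · intro l
        by_cases hl : l = i
        · subst hl; simp [hp]
        · simpa [hp, Function.update_of_ne hl] using hbinrest l hl
      · rw [hps]; linarith
    have hFq : F q ≤ C := by
      apply hbin
      · intro l
        by_cases hl : l = i
        · subst hl; simp [hq]
        · simpa [hq, Function.update_of_ne hl] using hbinrest l hl
      · have : ∑ l, q l = 1 + ∑ l ∈ Finset.univ.erase i, v l := by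
          rw [hq, Finset.sum_update_of_mem (Finset.mem_univ i),
            Finset.sdiff_singleton_eq_erase]
        rw [this, hmnat]
        linarith
    calc F v = F ((1 - v i) • p + (v i) • q) := by rw [← hvEq]
      _ ≤ (1 - v i) * F p + (v i) * F q := hF _ _ _ _ (by linarith) (by linarith) (by ring)
      _ ≤ (1 - v i) * C + (v i) * C := by
          have h1 : (0:ℝ) ≤ 1 - v i := by linarith
          have h2 : (0:ℝ) ≤ v i := by linarith
          gcongr
      _ = C := by ring
  · -- there is another fractional entry j
    have hN2 : 2 ≤ N := by omega
    obtain ⟨j, hj, hji⟩ : ∃ j, (v j ≠ 0 ∧ v j ≠ 1) ∧ j ≠ i := by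
      have hne : ((Finset.univ.filter fun l => v l ≠ 0 ∧ v l ≠ 1).erase i).Nonempty := by
        rw [← Finset.card_pos, Finset.card_erase_of_mem (by simp [hi.1, hi.2]), hcard]
        omega
      obtain ⟨j, hj⟩ := hne
      have h1 := Finset.mem_of_mem_erase hj
      simp only [Finset.mem_filter, Finset.mem_univ, true_and] at h1
      exact ⟨j, h1, Finset.ne_of_mem_erase hj⟩
    have hj0 : 0 < v j := lt_of_le_of_ne (hv j).1 (Ne.symm hj.1)
    have hj1 : v j < 1 := lt_of_le_of_ne (hv j).2 hj.2
    -- generic construction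
    have key : ∀ a b : Fin n, a ≠ b → v a ≠ 1 → (v b ≠ 0 ∧ v b ≠ 1) →
        (a = i ∨ a = j) → (b = i ∨ b = j) → ∀ t : ℝ, 0 < t → t ≤ 1 - v a → t ≤ v b →
        (t = 1 - v a ∨ t = v b) →
        F (Function.update (Function.update v a (v a + t)) b (v b - t)) ≤ C := by
      intro a b hab ha1 hb hai hbi t ht0 hta htb hcases
      set z := Function.update (Function.update v a (v a + t)) b (v b - t) with hz
      have hza : z a = v a + t := by
        rw [hz, Function.update_of_ne hab, Function.update_self]
      have hzb : z b = v b - t := by rw [hz, Function.update_self]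
      have hzl : ∀ l, l ≠ a → l ≠ b → z l = v l := by
        intro l hla hlb
        rw [hz, Function.update_of_ne hlb, Function.update_of_ne hla]
      have hvmem : ∀ c : Fin n, c = i ∨ c = j → c ∈ Finset.univ.filter
          fun l => v l ≠ 0 ∧ v l ≠ 1 := by
        rintro c (rfl | rfl) <;> simp [hi.1, hi.2, hj.1, hj.2]
      have hbounds : ∀ l, 0 ≤ z l ∧ z l ≤ 1 := by
        intro l
        by_cases hla : l = a
        · subst hla
          rw [hza]
          constructor
          · have := (hv l).1; linarith
          · linarith
        · by_cases hlb : l = b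
          · subst hlb
            rw [hzb]
            constructor
            · linarith
            · have := (hv l).2; linarith
          · rw [hzl l hla hlb]; exact hv l
      have hsum : ∑ l, z l = ∑ l, v l := by
        have hab' : a ∈ Finset.univ.erase b := Finset.mem_erase.2 ⟨hab, Finset.mem_univ a⟩
        rw [hz, Finset.sum_update_of_mem (Finset.mem_univ b), Finset.sdiff_singleton_eq_erase,
          Finset.sum_update_of_mem hab', Finset.sdiff_singleton_eq_erase]
        rw [← Finset.add_sum_erase _ v (Finset.mem_univ b), ← Finset.add_sum_erase _ v hab']
        ring
      have hsub : (Finset.univ.filter fun l => z l ≠ 0 ∧ z l ≠ 1).card < N := by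
        rcases hcases with hc1 | hc2
        · -- z a = 1
          have hza1 : z a = 1 := by rw [hza, hc1]; ring
          have hss : (Finset.univ.filter fun l => z l ≠ 0 ∧ z l ≠ 1) ⊆
              (Finset.univ.filter fun l => v l ≠ 0 ∧ v l ≠ 1).erase a := by
            intro l hl
            simp only [Finset.mem_filter, Finset.mem_univ, true_and] at hl
            have hla : l ≠ a := fun h => hl.2 (h ▸ hza1)
            refine Finset.mem_erase.2 ⟨hla, ?_⟩
            by_cases hlb : l = b
            · subst hlb; exact hvmem l hbi
            · rw [hzl l hla hlb] at hl
              simp [hl.1, hl.2]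
          calc (Finset.univ.filter fun l => z l ≠ 0 ∧ z l ≠ 1).card
              ≤ ((Finset.univ.filter fun l => v l ≠ 0 ∧ v l ≠ 1).erase a).card :=
                Finset.card_le_card hss
            _ = N - 1 := by rw [Finset.card_erase_of_mem (hvmem a hai), hcard]
            _ < N := by omega
        · -- z b = 0
          have hzb0 : z b = 0 := by rw [hzb, hc2]; ring
          have hss : (Finset.univ.filter fun l => z l ≠ 0 ∧ z l ≠ 1) ⊆
              (Finset.univ.filter fun l => v l ≠ 0 ∧ v l ≠ 1).erase b := by
            intro l hl
            simp only [Finset.mem_filter, Finset.mem_univ, true_and] at hl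
            have hlb : l ≠ b := fun h => hl.1 (h ▸ hzb0)
            refine Finset.mem_erase.2 ⟨hlb, ?_⟩
            by_cases hla : l = a
            · subst hla; exact hvmem l hai
            · rw [hzl l hla hlb] at hl
              simp [hl.1, hl.2]
          calc (Finset.univ.filter fun l => z l ≠ 0 ∧ z l ≠ 1).card
              ≤ ((Finset.univ.filter fun l => v l ≠ 0 ∧ v l ≠ 1).erase b).card :=
                Finset.card_le_card hss
            _ = N - 1 := by rw [Finset.card_erase_of_mem (hvmem b hbi), hcard]
            _ < N := by omega
      exact ih _ hsub z rfl hbounds (by rw [hsum]; exact hs)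
    set t1 := min (1 - v i) (v j) with ht1
    set t2 := min (v i) (1 - v j) with ht2
    have ht1pos : 0 < t1 := lt_min (by linarith) hj0
    have ht2pos : 0 < t2 := lt_min hi0 (by linarith)
    set p := Function.update (Function.update v i (v i + t1)) j (v j - t1) with hp
    set q := Function.update (Function.update v j (v j + t2)) i (v i - t2) with hq
    have hFp : F p ≤ C := by
      apply key i j (Ne.symm hji) hi.2 hj (Or.inl rfl) (Or.inr rfl) t1 ht1pos
        (min_le_left _ _) (min_le_right _ _)
      rcases min_choice (1 - v i) (v j) with h | h
      · exact Or.inl (ht1.trans h)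
      · exact Or.inr (ht1.trans h)
    have hFq : F q ≤ C := by
      apply key j i hji hj.2 hi (Or.inr rfl) (Or.inl rfl) t2 ht2pos ?_ ?_ ?_
      · exact min_le_right _ _
      · exact min_le_left _ _
      · rcases min_choice (v i) (1 - v j) with h | h
        · exact Or.inr (ht2.trans h)
        · exact Or.inl (ht2.trans h)
    have hpi : p i = v i + t1 := by
      rw [hp, Function.update_of_ne (Ne.symm hji), Function.update_self]
    have hpj : p j = v j - t1 := by rw [hp, Function.update_self]
    have hqi : q i = v i - t2 := by rw [hq, Function.update_self]
    have hqj : q j = v j + t2 := by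
      rw [hq, Function.update_of_ne hji, Function.update_self]
    have hplq : ∀ l, l ≠ i → l ≠ j → p l = v l ∧ q l = v l := by
      intro l hli hlj
      constructor
      · rw [hp, Function.update_of_ne hlj, Function.update_of_ne hli]
      · rw [hq, Function.update_of_ne hli, Function.update_of_ne hlj]
    have hvEq : v = (t2 / (t1 + t2)) • p + (t1 / (t1 + t2)) • q := by
      have hts : t1 + t2 ≠ 0 := by positivity
      funext l
      simp only [Pi.add_apply, Pi.smul_apply, smul_eq_mul]
      by_cases hli : l = i
      · subst hli
        rw [hpi, hqi]
        field_simp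
        ring
      · by_cases hlj : l = j
        · subst hlj
          rw [hpj, hqj]
          field_simp
          ring
        · rw [(hplq l hli hlj).1, (hplq l hli hlj).2]
          field_simp
          ring
    have ha0 : 0 ≤ t2 / (t1 + t2) := by positivity
    have hb0 : 0 ≤ t1 / (t1 + t2) := by positivity
    have hab1 : t2 / (t1 + t2) + t1 / (t1 + t2) = 1 := by
      field_simp
      ring
    calc F v = F ((t2 / (t1 + t2)) • p + (t1 / (t1 + t2)) • q) := by rw [← hvEq]
      _ ≤ (t2 / (t1 + t2)) * F p + (t1 / (t1 + t2)) * F q := hF _ _ _ _ ha0 hb0 hab1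
      _ ≤ (t2 / (t1 + t2)) * C + (t1 / (t1 + t2)) * C := by gcongr
      _ = C := by rw [← add_mul, hab1, one_mul]

lemma n2_sub_le {ι : Type*} [Fintype ι] (x y : ι → ℝ) : n2 (x - y) ≤ n2 x + n2 y := by
  rw [sub_eq_add_neg]
  exact (n2_add_le x (-y)).trans (by rw [n2_neg])

lemma mul_binary_eq {n : ℕ} (h b : Fin n → ℝ) (hb : ∀ i, b i = 0 ∨ b i = 1) :
    h * b = restr h (supp b) := by
  funext i
  rcases hb i with h0 | h1
  · have : i ∉ supp b := by simp [supp, h0]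
    simp [restr, this, Pi.mul_apply, h0]
  · have : i ∈ supp b := by simp [supp, h1]
    simp [restr, this, Pi.mul_apply, h1]

lemma binary_card_eq_sum {n : ℕ} (b : Fin n → ℝ) (hb : ∀ i, b i = 0 ∨ b i = 1) :
    ((supp b).card : ℝ) = ∑ i, b i := by
  rw [sum01 Finset.univ b (fun i _ => hb i)]
  congr 2
  apply Finset.filter_congr
  intro i _
  rcases hb i with h | h <;> simp [supp, h]


theorem stmt9
    {m n : ℕ} (A : Matrix (Fin m) (Fin n) ℝ)
    (x : Fin n → ℝ) (ν y : Fin m → ℝ) (hy : y = A.mulVec x + ν)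
    (k : ℕ) (hk : 0 < k)
    (S : Finset (Fin n)) (hS : IsTopK x k S)
    (ν' : Fin m → ℝ) (hν' : ν' = A.mulVec (restr x Sᶜ) + ν)
    (ω : ℕ) (hω : 1 ≤ ω)
    (δk δ2k δ3k : ℝ) (hδk : IsRIC A k δk) (hδ2k : IsRIC A (2 * k) δ2k)
    (hδ3k : IsRIC A (3 * k) δ3k)
    (wh : Fin n → ℝ) (hwh : InW k wh) (hsupp : supp (restr x S) ⊆ supp wh)
    (xp : Fin n → ℝ) (hxp : Sparse k xp)
    (up : Fin n → ℝ) (hup : up = xp + A.transpose.mulVec (y - A.mulVec xp))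
    (w : ℕ → Fin n → ℝ) (hw : SCM A y k ω up w) :
    n2 (y - A.mulVec (up * ∏ l ∈ Finset.range ω, w l))
      ≤ (δ2k + 2 * ((ω : ℝ) - 1) * δ3k) * Real.sqrt (1 + δk) * n2 (restr x S - xp)
        + (2 * (ω : ℝ) - 1) * Real.sqrt (1 + δk) * n2 (A.transpose.mulVec ν')
        + n2 ν' := by
  obtain ⟨hδk0, hRk⟩ := hδk.1
  obtain ⟨hδ2k0, hR2k⟩ := hδ2k.1
  obtain ⟨hδ3k0, hR3k⟩ := hδ3k.1
  set xs : Fin n → ℝ := restr x S with hxs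
  set d : Fin n → ℝ := xs - xp with hd
  set h1 : Fin n → ℝ := A.transpose.mulVec (A.mulVec d) - d with hh1
  set h2 : Fin n → ℝ := A.transpose.mulVec ν' with hh2
  set s : ℝ := Real.sqrt (1 + δk) with hsdef
  have hs0 : 0 ≤ s := Real.sqrt_nonneg _
  set D : ℝ := n2 d with hD
  set Nn : ℝ := n2 h2 with hNn
  have hD0 : 0 ≤ D := n2_nonneg _
  have hN0 : 0 ≤ Nn := n2_nonneg _
  have hνn0 : 0 ≤ n2 ν' := n2_nonneg _
  -- support facts
  have hwh01 := hwh.1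
  have hcardwh : (supp wh).card = k := by
    have hcast : ((supp wh).card : ℝ) = (k : ℝ) := by
      rw [binary_card_eq_sum wh hwh01, sum01 Finset.univ wh (fun i _ => hwh01 i), hwh.2]
    exact_mod_cast hcast
  have hsuppxs : supp xs ⊆ S := by
    intro i hi
    simp only [supp, Finset.mem_filter, Finset.mem_univ, true_and, hxs, restr] at hi
    by_contra hc
    simp [hc] at hi
  have hcardxs : (supp xs).card ≤ k := by
    calc (supp xs).card ≤ S.card := Finset.card_le_card hsuppxs
      _ = k := hS.1
  have hsuppd : supp d ⊆ supp xs ∪ supp xp := by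
    intro i hi
    simp only [supp, Finset.mem_filter, Finset.mem_univ, true_and, Finset.mem_union, hd,
      Pi.sub_apply] at *
    by_contra hc
    push_neg at hc
    rw [hc.1, hc.2] at hi
    simp at hi
  have hcardd : (supp d).card ≤ 2 * k := by
    calc (supp d).card ≤ (supp xs ∪ supp xp).card := Finset.card_le_card hsuppd
      _ ≤ (supp xs).card + (supp xp).card := Finset.card_union_le _ _
      _ ≤ 2 * k := by have hxpc : (supp xp).card ≤ k := hxp; omega
  -- y = A xs + ν'
  have hyxs : y = A.mulVec xs + ν' := by
    rw [hy, hν']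
    have hxsplit : x = xs + restr x Sᶜ := by
      funext i
      by_cases hi : i ∈ S <;> simp [hxs, restr, Pi.add_apply, hi]
    calc A.mulVec x + ν = A.mulVec (xs + restr x Sᶜ) + ν := by rw [← hxsplit]
      _ = A.mulVec xs + (A.mulVec (restr x Sᶜ) + ν) := by rw [Matrix.mulVec_add]; abel
  -- up - xs = h1 + h2
  have hupxs : up - xs = h1 + h2 := by
    rw [hup, hh1, hh2, hd, hyxs]
    rw [show A.mulVec xs + ν' - A.mulVec xp = A.mulVec (xs - xp) + ν' by
      rw [Matrix.mulVec_sub]; abel]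
    rw [Matrix.mulVec_add]
    abel
  -- xs vanishes off supp wh
  have hxswh : ∀ i, xs i * (1 - wh i) = 0 := by
    intro i
    by_cases hx0 : xs i = 0
    · rw [hx0]; ring
    · have hmem : i ∈ supp xs := by simp [supp, hx0]
      have hiw := hsupp hmem
      simp only [supp, Finset.mem_filter, Finset.mem_univ, true_and] at hiw
      rcases hwh01 i with h | h
      · exact absurd h hiw
      · rw [h]; ring
  have hPk_wh : InP k wh := by
    constructor
    · rw [← binary_card_eq_sum wh hwh01, hcardwh]
    · intro i
      rcases hwh01 i with h | h <;> simp [h]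
  -- the generic binary-mask estimate
  have hbinEst : ∀ (q : ℕ) (δ' : ℝ), 0 ≤ δ' → SatRIP A q δ' →
      ∀ b : Fin n → ℝ, (∀ i, b i = 0 ∨ b i = 1) → (supp b).card ≤ k →
      (supp b ∪ supp d).card ≤ q →
      n2 (A.mulVec ((h1 + h2) * b)) ≤ s * (δ' * D + Nn) := by
    intro q δ' hδ' hA' b hb hbk hbq
    have hbeq : (h1 + h2) * b = restr h1 (supp b) + restr h2 (supp b) := by
      rw [show (h1 + h2) * b = h1 * b + h2 * b from funext fun i => by
        simp only [Pi.mul_apply, Pi.add_apply]; ring]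
      rw [mul_binary_eq h1 b hb, mul_binary_eq h2 b hb]
    have hsp1 : Sparse k (restr h1 (supp b)) :=
      le_trans (Finset.card_le_card (supp_restr_subset _ _)) hbk
    have hsp2 : Sparse k (restr h2 (supp b)) :=
      le_trans (Finset.card_le_card (supp_restr_subset _ _)) hbk
    have hm1 : n2 (restr h1 (supp b)) ≤ δ' * D := by
      rw [hh1, hD, hd]
      exact mask_bound hA' hδ' (xs - xp) (supp b) (by rw [← hd]; exact hbq)
    have hm2 : n2 (restr h2 (supp b)) ≤ Nn := by rw [hNn]; exact n2_restr_le h2 (supp b)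
    calc n2 (A.mulVec ((h1 + h2) * b))
        = n2 (A.mulVec (restr h1 (supp b)) + A.mulVec (restr h2 (supp b))) := by
          rw [hbeq, Matrix.mulVec_add]
      _ ≤ n2 (A.mulVec (restr h1 (supp b))) + n2 (A.mulVec (restr h2 (supp b))) := n2_add_le _ _
      _ ≤ s * n2 (restr h1 (supp b)) + s * n2 (restr h2 (supp b)) := by
          rw [hsdef]
          exact add_le_add (rip_n2 hRk hδk0 hsp1) (rip_n2 hRk hδk0 hsp2)
      _ ≤ s * (δ' * D) + s * Nn := by
          exact add_le_add (by nlinarith) (by nlinarith)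
      _ = s * (δ' * D + Nn) := by ring
  -- base case
  have base : n2 (y - A.mulVec (up * ∏ l ∈ Finset.range 1, w l)) ≤ s * (δ2k * D + Nn) + n2 ν' := by
    have h0 := (hw 0 (by omega)).2 wh hPk_wh
    simp only [Finset.range_zero, Finset.prod_empty, mul_one] at h0
    rw [Finset.prod_range_one]
    refine le_trans h0 ?_
    have hmul : up * wh = xs + (h1 + h2) * wh := by
      funext i
      have e1 : up i - xs i = h1 i + h2 i := congrFun hupxs i
      have e2 := hxswh i
      simp only [Pi.mul_apply, Pi.add_apply]
      linear_combination wh i * e1 - e2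
    have hid : y - A.mulVec (up * wh) = ν' - A.mulVec ((h1 + h2) * wh) := by
      rw [hyxs, hmul, Matrix.mulVec_add]
      abel
    rw [hid]
    refine le_trans (n2_sub_le _ _) ?_
    rw [add_comm]
    refine add_le_add ?_ le_rfl
    have hwhq : (supp wh ∪ supp d).card ≤ 2 * k := by
      have hsub2 : supp wh ∪ supp d ⊆ supp wh ∪ supp xp := by
        intro i hi
        rcases Finset.mem_union.1 hi with hi | hi
        · exact Finset.mem_union.2 (Or.inl hi)
        · rcases Finset.mem_union.1 (hsuppd hi) with hi2 | hi2
          · exact Finset.mem_union.2 (Or.inl (hsupp hi2))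
          · exact Finset.mem_union.2 (Or.inr hi2)
      calc (supp wh ∪ supp d).card ≤ (supp wh ∪ supp xp).card := Finset.card_le_card hsub2
        _ ≤ (supp wh).card + (supp xp).card := Finset.card_union_le _ _
        _ ≤ 2 * k := by have hxpc : (supp xp).card ≤ k := hxp; omega
    exact hbinEst (2 * k) δ2k hδ2k0 hR2k wh hwh01 (le_of_eq hcardwh) hwhq
  -- step estimate
  have hwP : ∀ l, l < ω → InP k (w l) := fun l hl => (hw l hl).1
  have hstep : ∀ j, 1 ≤ j → j < ω →
      n2 (y - A.mulVec (up * ∏ l ∈ Finset.range (j + 1), w l)) ≤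
      n2 (y - A.mulVec (up * ∏ l ∈ Finset.range j, w l)) + s * (δ3k * D + Nn) := by
    intro j hj1 hjω
    have hopt := (hw j hjω).2 wh hPk_wh
    rw [show up * (∏ l ∈ Finset.range j, w l) * w j = up * ∏ l ∈ Finset.range (j + 1), w l by
      rw [Finset.prod_range_succ, mul_assoc]] at hopt
    refine le_trans hopt ?_
    set G : Fin n → ℝ := ∏ l ∈ Finset.range j, w l with hG
    set mask : Fin n → ℝ := fun i => G i * (1 - wh i) with hmask
    have hidm : (h1 + h2) * mask = up * G - up * G * wh := by
      funext i
      have e1 : up i - xs i = h1 i + h2 i := congrFun hupxs i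
      have e2 := hxswh i
      simp only [Pi.mul_apply, Pi.add_apply, Pi.sub_apply, hmask]
      linear_combination (-(G i * (1 - wh i))) * e1 - G i * e2
    have hid2 : y - A.mulVec (up * G * wh) =
        (y - A.mulVec (up * G)) + A.mulVec ((h1 + h2) * mask) := by
      rw [hidm, Matrix.mulVec_sub]
      abel
    rw [hid2]
    refine le_trans (n2_add_le _ _) ?_
    refine add_le_add le_rfl ?_
    -- bound the mask term via convex decomposition
    have hGi : ∀ i, 0 ≤ G i ∧ G i ≤ 1 := by
      intro i
      rw [hG, Finset.prod_apply]
      constructor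
      · exact Finset.prod_nonneg fun l hl =>
          ((hwP l (lt_of_lt_of_le (Finset.mem_range.1 hl) (le_of_lt hjω))).2 i).1
      · exact Finset.prod_le_one
          (fun l hl => ((hwP l (lt_of_lt_of_le (Finset.mem_range.1 hl) (le_of_lt hjω))).2 i).1)
          (fun l hl => ((hwP l (lt_of_lt_of_le (Finset.mem_range.1 hl) (le_of_lt hjω))).2 i).2)
    have hGle : ∀ i, G i ≤ w 0 i := by
      intro i
      rw [hG, Finset.prod_apply]
      obtain ⟨jj, rfl⟩ : ∃ jj, j = jj + 1 := ⟨j - 1, by omega⟩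
      rw [Finset.prod_range_succ']
      have hrest : ∏ l ∈ Finset.range jj, w (l + 1) i ≤ 1 := by
        refine Finset.prod_le_one (fun l hl => ?_) (fun l hl => ?_)
        · exact ((hwP (l + 1) (by have := Finset.mem_range.1 hl; omega)).2 i).1
        · exact ((hwP (l + 1) (by have := Finset.mem_range.1 hl; omega)).2 i).2
      exact mul_le_of_le_one_left ((hwP 0 (by omega)).2 i).1 hrest
    have hmaskb : ∀ i, 0 ≤ mask i ∧ mask i ≤ 1 := by
      intro i
      have h1i := hGi i
      have hwhb := hPk_wh.2 i
      constructor
      · show 0 ≤ G i * (1 - wh i)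
        exact mul_nonneg h1i.1 (by linarith [hwhb.2])
      · show G i * (1 - wh i) ≤ 1
        calc G i * (1 - wh i) ≤ 1 * 1 :=
              mul_le_mul h1i.2 (by linarith [hwhb.1]) (by linarith [hwhb.2]) one_pos.le
          _ = 1 := mul_one 1
    have hmasksum : ∑ i, mask i ≤ (k : ℝ) := by
      have h1sum : ∑ i, mask i ≤ ∑ i, w 0 i := by
        refine Finset.sum_le_sum fun i _ => ?_
        have h1i := hGi i
        have hwhb := hPk_wh.2 i
        show G i * (1 - wh i) ≤ w 0 i
        calc G i * (1 - wh i) ≤ G i * 1 :=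
              mul_le_mul_of_nonneg_left (by linarith [hwhb.1]) h1i.1
          _ = G i := mul_one _
          _ ≤ w 0 i := hGle i
      rw [(hwP 0 (by omega)).1] at h1sum
      exact h1sum
    have hbin : ∀ b : Fin n → ℝ, (∀ i, b i = 0 ∨ b i = 1) → (∑ i, b i) ≤ (k : ℝ) →
        n2 (A.mulVec ((h1 + h2) * b)) ≤ s * (δ3k * D + Nn) := by
      intro b hb hbsum
      have hbk : (supp b).card ≤ k := by
        have : ((supp b).card : ℝ) ≤ (k : ℝ) := by
          rw [binary_card_eq_sum b hb]; exact hbsum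
        exact_mod_cast this
      refine hbinEst (3 * k) δ3k hδ3k0 hR3k b hb hbk ?_
      calc (supp b ∪ supp d).card ≤ (supp b).card + (supp d).card := Finset.card_union_le _ _
        _ ≤ 3 * k := by omega
    have hF : ∀ (a b : ℝ) (u v : Fin n → ℝ), 0 ≤ a → 0 ≤ b → a + b = 1 →
        n2 (A.mulVec ((h1 + h2) * (a • u + b • v))) ≤
        a * n2 (A.mulVec ((h1 + h2) * u)) + b * n2 (A.mulVec ((h1 + h2) * v)) := by
      intro a b u v ha hb hab
      have heq : (h1 + h2) * (a • u + b • v) = a • ((h1 + h2) * u) + b • ((h1 + h2) * v) := by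
        funext i
        simp only [Pi.mul_apply, Pi.add_apply, Pi.smul_apply, smul_eq_mul]
        ring
      rw [heq, Matrix.mulVec_add, Matrix.mulVec_smul, Matrix.mulVec_smul]
      refine le_trans (n2_add_le _ _) ?_
      rw [n2_smul, n2_smul, abs_of_nonneg ha, abs_of_nonneg hb]
    exact comb (s * (δ3k * D + Nn)) (fun v => n2 (A.mulVec ((h1 + h2) * v))) hF hbin
      mask hmaskb hmasksum
  -- induction
  have main : ∀ j, 1 ≤ j → j ≤ ω →
      n2 (y - A.mulVec (up * ∏ l ∈ Finset.range j, w l)) ≤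
      (s * (δ2k * D + Nn) + n2 ν') + ((j : ℝ) - 1) * (s * (δ3k * D + Nn)) := by
    intro j hj1
    induction j, hj1 using Nat.le_induction with
    | base => intro _; simpa using base
    | succ j hj ihj =>
      intro hjω
      have hjω' : j < ω := hjω
      refine le_trans (hstep j hj hjω') ?_
      have hmain := ihj (le_of_lt hjω')
      push_cast
      linarith
  have hfin := main ω hω le_rfl
  have hω1 : (0:ℝ) ≤ (ω : ℝ) - 1 := by
    have : (1:ℝ) ≤ (ω : ℝ) := by exact_mod_cast hω
    linarith
  have e1 : 0 ≤ ((ω : ℝ) - 1) * (δ3k * (s * D)) :=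
    mul_nonneg hω1 (mul_nonneg hδ3k0 (mul_nonneg hs0 hD0))
  have e2 : 0 ≤ ((ω : ℝ) - 1) * (s * Nn) := mul_nonneg hω1 (mul_nonneg hs0 hN0)
  calc n2 (y - A.mulVec (up * ∏ l ∈ Finset.range ω, w l))
      ≤ (s * (δ2k * D + Nn) + n2 ν') + ((ω : ℝ) - 1) * (s * (δ3k * D + Nn)) := hfin
    _ ≤ (δ2k + 2 * ((ω : ℝ) - 1) * δ3k) * s * D + (2 * (ω : ℝ) - 1) * s * Nn + n2 ν' := by
        nlinarith [e1, e2]
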